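/- For three pairwise distinct indices i, j, k and mutually orthogonal smooth projections Pᵢ, the 3-form tr(Pᵢ dPⱼ dPⱼ dPₖ) has the cyclic symmetry tr(Pᵢ dPⱼ dPⱼ dPₖ) = tr(Pₖ dPᵢ dPᵢ dPⱼ) = tr(Pⱼ dPₖ dPₖ dPᵢ). -/
import Mathlib


/-- The trace of a continuous linear endomorphism. -/
noncomputable def trL {H : Type*} [NormedAddCommGroup H] [InnerProductSpace ℂ H]
    (T : H →L[ℂ] H) : ℂ :=
  LinearMap.trace ℂ H T.toLinearMap

/-- The alternation (evaluation of the 3-form built from the 3-linear expression `f`). -/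
def alt3 {E : Type*} (f : E → E → E → ℂ) (u v w : E) : ℂ :=
  f u v w - f v u w - f u w v + f v w u + f w u v - f w v u

lemma trL_mul_comm {H : Type*} [NormedAddCommGroup H] [InnerProductSpace ℂ H]
    (A B : H →L[ℂ] H) : trL (A * B) = trL (B * A) :=
  LinearMap.trace_mul_comm ℂ A.toLinearMap B.toLinearMap

lemma trL_neg {H : Type*} [NormedAddCommGroup H] [InnerProductSpace ℂ H]
    (A : H →L[ℂ] H) : trL (-A) = -trL A := by
  simp [trL]

/-- Pure ring identity: for idempotents `qa, qb, qc` with the "Leibniz" relations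
`qa * X + X' * qb = 0` and `qc * Z' + Z * qa = 0`, the sandwiched product
decomposes into blocks with a sign. -/
lemma block_eq {A : Type*} [Ring A] (qa qb qc X X' Y Z Z' : A)
    (ha : qa * qa = qa) (hb : qb * qb = qb) (hc : qc * qc = qc)
    (hx : qa * X + X' * qb = 0) (hz : qc * Z' + Z * qa = 0) :
    qa * (X * (Y * Z)) * qa
      = -((qa * X' * qb) * ((qb * Y * qc) * (qc * Z * qa))) := by
  have k1x : qa * X = qa * X * qb := by
    linear_combination (norm := noncomm_ring) hx - hx * qb + X' * hb
  have k3x : qa * X * qb = -(qa * X' * qb) := by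
    linear_combination (norm := noncomm_ring) qa * hx * qb - ha * (X * qb) - (qa * X') * hb
  have k2z : Z * qa = qc * Z * qa := by
    linear_combination (norm := noncomm_ring)
      hz * qa - Z * ha - qc * hz * qa + hc * (Z' * qa) + (qc * Z) * ha
  calc qa * (X * (Y * Z)) * qa = (qa * X) * (Y * (Z * qa)) := by noncomm_ring
    _ = (qa * X * qb) * (Y * (qc * Z * qa)) := by conv_lhs => rw [k1x, k2z]
    _ = (-(qa * X' * qb)) * (Y * (qc * Z * qa)) := by conv_lhs => rw [k3x]
    _ = -((qa * X' * qb) * ((qb * Y * qc) * (qc * Z * qa))) := by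
        linear_combination (norm := noncomm_ring)
          (qa * X') * hb * (Y * (qc * qc * Z * qa)) + (qa * X' * qb * Y) * hc * (Z * qa)

/-- For pairwise distinct `i, j, k` and smooth mutually orthogonal
projections summing to `1`, the 3-form `tr(Pᵢ dPⱼ dPⱼ dPₖ)` has the cyclic symmetry
`tr(Pᵢ dPⱼ dPⱼ dPₖ) = tr(Pₖ dPᵢ dPᵢ dPⱼ) = tr(Pⱼ dPₖ dPₖ dPᵢ)`. -/
theorem three_form_cyclic_symmetry
    {E H : Type*} [NormedAddCommGroup E] [NormedSpace ℝ E]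
    [NormedAddCommGroup H] [InnerProductSpace ℂ H] [FiniteDimensional ℂ H]
    {n : ℕ} (P : Fin n → E → (H →L[ℂ] H))
    (hPdiff : ∀ i, Differentiable ℝ (P i))
    (hsa : ∀ i m, IsSelfAdjoint (P i m))
    (horth : ∀ i j m, P i m * P j m = if i = j then P i m else 0)
    (hsum : ∀ m, ∑ i, P i m = 1)
    (i j k : Fin n) (hij : i ≠ j) (hik : i ≠ k) (hjk : j ≠ k) (m : E) :
    ∀ u v w : E,
      alt3 (fun a b c => trL (P i m * (fderiv ℝ (P j) m a) * (fderiv ℝ (P j) m b) *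
          (fderiv ℝ (P k) m c))) u v w =
        alt3 (fun a b c => trL (P k m * (fderiv ℝ (P i) m a) * (fderiv ℝ (P i) m b) *
          (fderiv ℝ (P j) m c))) u v w ∧
      alt3 (fun a b c => trL (P k m * (fderiv ℝ (P i) m a) * (fderiv ℝ (P i) m b) *
          (fderiv ℝ (P j) m c))) u v w =
        alt3 (fun a b c => trL (P j m * (fderiv ℝ (P k) m a) * (fderiv ℝ (P k) m b) *
          (fderiv ℝ (P i) m c))) u v w := by
  intro u v w
  -- abbreviations
  let Q : Fin n → (H →L[ℂ] H) := fun a => P a m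
  let D : Fin n → E → (H →L[ℂ] H) := fun a x => fderiv ℝ (P a) m x
  have hidem : ∀ a, Q a * Q a = Q a := by
    intro a; simpa [Q] using horth a a m
  -- Leibniz rule applied to `P a * P b = 0` for `a ≠ b`
  have hleib : ∀ a b, a ≠ b → ∀ x, Q a * D b x + D a x * Q b = 0 := by
    intro a b hab x
    have h1 : HasFDerivAt (fun y => P a y * P b y)
        (P a m • (fderiv ℝ (P b) m) + (fderiv ℝ (P a) m).smulRight (P b m)) m :=
      ((hPdiff a) m).hasFDerivAt.mul' ((hPdiff b) m).hasFDerivAt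
    have h2 : (fun y => P a y * P b y) = fun _ => (0 : H →L[ℂ] H) := by
      funext y
      simpa [if_neg hab] using horth a b y
    have h3 : HasFDerivAt (fun y => P a y * P b y) (0 : E →L[ℝ] (H →L[ℂ] H)) m := by
      rw [h2]; exact hasFDerivAt_const _ _
    have h4 := h1.unique h3
    have h5 := congrArg (fun (T : E →L[ℝ] (H →L[ℂ] H)) => T x) h4
    simpa [Q, D, ContinuousLinearMap.smulRight_apply, smul_eq_mul] using h5
  -- the blocks
  let R : Fin n → Fin n → E → (H →L[ℂ] H) := fun a b x => Q a * D a x * Q b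
  -- trace cyclicity helpers
  have cyc2 : ∀ (A : H →L[ℂ] H) (a : Fin n), trL (Q a * A) = trL (Q a * A * Q a) := by
    intro A a
    rw [trL_mul_comm (Q a * A) (Q a), ← mul_assoc, hidem a]
  have cyc3 : ∀ A B C : H →L[ℂ] H, trL (A * (B * C)) = trL (B * (C * A)) := by
    intro A B C
    rw [trL_mul_comm A (B * C), mul_assoc]
  -- the main product computation
  have main : ∀ a b c : Fin n, a ≠ b → c ≠ a → ∀ x y z,
      trL (Q a * D b x * D b y * D c z)
        = -trL (R a b x * (R b c y * R c a z)) := by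
    intro a b c hab hca x y z
    have e1 : Q a * D b x * D b y * D c z = Q a * (D b x * (D b y * D c z)) := by
      noncomm_ring
    rw [e1, cyc2]
    have e2 := block_eq (Q a) (Q b) (Q c) (D b x) (D a x) (D b y) (D c z) (D a z)
      (hidem a) (hidem b) (hidem c) (hleib a b hab x) (hleib c a hca z)
    rw [e2, trL_neg]
  -- the three forms in terms of the cyclic block trace
  have hf : ∀ x y z, trL (P i m * (fderiv ℝ (P j) m x) * (fderiv ℝ (P j) m y) *
      (fderiv ℝ (P k) m z)) = -trL (R i j x * (R j k y * R k i z)) :=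
    main i j k hij (Ne.symm hik)
  have hg : ∀ x y z, trL (P k m * (fderiv ℝ (P i) m x) * (fderiv ℝ (P i) m y) *
      (fderiv ℝ (P j) m z)) = -trL (R i j y * (R j k z * R k i x)) := by
    intro x y z
    rw [main k i j (Ne.symm hik) hjk x y z, cyc3]
  have hh : ∀ x y z, trL (P j m * (fderiv ℝ (P k) m x) * (fderiv ℝ (P k) m y) *
      (fderiv ℝ (P i) m z)) = -trL (R i j z * (R j k x * R k i y)) := by
    intro x y z
    rw [main j k i hjk hij x y z, cyc3, cyc3]
  constructor <;> simp only [alt3, hf, hg, hh] <;> ring
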